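/- arXiv:math/0404377 — 4 statements merged into one kernel-verified Lean document; each statement's English description precedes it below -/
import Mathlib

section
/- Let V and W be finite-dimensional real vector spaces with dim V = q + 1, q ≥ 1, and let δ : V × V → W be an alternating bilinear map such that the span of its image {δ(x, y) : x, y ∈ V} has dimension q. Let B ⊆ V be a q-dimensional subspace on which δ vanishes: δ(b, b') = 0 for all b, b' ∈ B. Then: (i) every nonzero b ∈ B has degree 1, i.e. the linear map y ↦ δ(b, y) has rank exactly 1; and (ii) every X ∈ V \ B has degree q, i.e. the linear map y ↦ δ(X, y) has rank exactly q. -/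
/-!
Fix `X₀ ∉ B`, so that `V = B ⊕ ℝ X₀`. Since `δ` vanishes on `B × B`,
`δ (b + t X₀) (b' + s X₀) = δ X₀ (t b' - s b)`, so the whole image of `δ` lies in the range of
`δ X₀`; the same holds for every `X ∉ B`, which gives degree `q` off `B`. By rank–nullity the
kernel of `δ X₀` is then the line `ℝ X₀`, so `δ b X₀ ≠ 0` for `0 ≠ b ∈ B`, while
`δ b (b' + s X₀) = s δ b X₀` shows that the range of `δ b` is spanned by this vector.
-/

open Module Submodule

section

variable {K V W : Type*} [Field K] [AddCommGroup V] [Module K V] [AddCommGroup W] [Module K W]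

theorem Submodule.sup_span_singleton_eq_top_of_finrank_add_one [FiniteDimensional K V]
    {B : Submodule K V} (hB : finrank K B + 1 = finrank K V) {X : V} (hX : X ∉ B) :
    B ⊔ K ∙ X = ⊤ :=
  eq_top_of_finrank_eq (by rw [finrank_sup_span_singleton hX, hB])

theorem Submodule.exists_mem_add_smul_eq_of_sup_span_eq_top {B : Submodule K V} {X : V}
    (hX : B ⊔ K ∙ X = ⊤) (v : V) : ∃ b ∈ B, ∃ t : K, b + t • X = v := by
  obtain ⟨b, hb, z, hz, rfl⟩ := mem_sup.mp (hX ▸ mem_top : v ∈ B ⊔ K ∙ X)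
  obtain ⟨t, rfl⟩ := mem_span_singleton.mp hz
  exact ⟨b, hb, t, rfl⟩

theorem LinearMap.ker_eq_span_singleton_of_finrank_range_add_one [FiniteDimensional K V]
    {f : V →ₗ[K] W} (hf : finrank K (range f) + 1 = finrank K V) {x : V} (hx : f x = 0)
    (hx₀ : x ≠ 0) : ker f = K ∙ x := by
  have hker : finrank K (ker f) = 1 := by
    have := f.finrank_range_add_finrank_ker
    omega
  refine (eq_of_le_of_finrank_eq ?_ ?_).symm
  · rwa [span_singleton_le_iff_mem, LinearMap.mem_ker]
  · rw [finrank_span_singleton hx₀, hker]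

variable {δ : V →ₗ[K] V →ₗ[K] W} {B : Submodule K V}

theorem LinearMap.apply_add_smul_apply_add_smul_of_isAlt (hδ : δ.IsAlt)
    (hB : ∀ b ∈ B, ∀ b' ∈ B, δ b b' = 0) {b b' : V} (hb : b ∈ B) (hb' : b' ∈ B) (X : V)
    (t s : K) : δ (b + t • X) (b' + s • X) = δ X (t • b' - s • b) := by
  simp only [map_add, map_smul, map_sub, LinearMap.add_apply, LinearMap.smul_apply,
    hB b hb b' hb', hδ X, ← hδ.neg X b, smul_zero, smul_neg, zero_add, add_zero]
  abel

theorem LinearMap.range_eq_span_image_of_isAlt (hδ : δ.IsAlt)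
    (hB : ∀ b ∈ B, ∀ b' ∈ B, δ b b' = 0) {X : V} (hX : B ⊔ K ∙ X = ⊤) :
    range (δ X) = span K {w : W | ∃ x y : V, w = δ x y} := by
  refine le_antisymm ?_ (span_le.mpr ?_)
  · rintro w ⟨y, rfl⟩
    exact subset_span ⟨X, y, rfl⟩
  · rintro w ⟨x, y, rfl⟩
    obtain ⟨b, hb, t, rfl⟩ := exists_mem_add_smul_eq_of_sup_span_eq_top hX x
    obtain ⟨b', hb', s, rfl⟩ := exists_mem_add_smul_eq_of_sup_span_eq_top hX y
    exact ⟨t • b' - s • b, (apply_add_smul_apply_add_smul_of_isAlt hδ hB hb hb' X t s).symm⟩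

theorem LinearMap.range_apply_eq_span_singleton_of_mem (hB : ∀ b ∈ B, ∀ b' ∈ B, δ b b' = 0)
    {b : V} (hb : b ∈ B) {X : V} (hX : B ⊔ K ∙ X = ⊤) : range (δ b) = K ∙ δ b X := by
  refine le_antisymm ?_ (span_singleton_le_iff_mem _ _ |>.mpr ⟨X, rfl⟩)
  rintro w ⟨y, rfl⟩
  obtain ⟨b', hb', s, rfl⟩ := exists_mem_add_smul_eq_of_sup_span_eq_top hX y
  rw [map_add, map_smul, hB b hb b' hb', zero_add]
  exact smul_mem _ s (mem_span_singleton_self _)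

end

theorem weber_structure_degrees_general
    (V W : Type*)
    [AddCommGroup V] [Module ℝ V] [FiniteDimensional ℝ V]
    [AddCommGroup W] [Module ℝ W]
    (q : ℕ) (hV : Module.finrank ℝ V = q + 1)
    (δ : V →ₗ[ℝ] V →ₗ[ℝ] W)
    (halt : ∀ x : V, δ x x = 0)
    (himage : Module.finrank ℝ
      (Submodule.span ℝ {w : W | ∃ x y : V, w = δ x y}) = q)
    (B : Submodule ℝ V) (hB : Module.finrank ℝ B = q)
    (hvanish : ∀ b ∈ B, ∀ b' ∈ B, δ b b' = 0) :
    (∀ b ∈ B, b ≠ 0 → Module.finrank ℝ (LinearMap.range (δ b)) = 1) ∧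
    (∀ X : V, X ∉ B → Module.finrank ℝ (LinearMap.range (δ X)) = q) := by
  have hδ : δ.IsAlt := halt
  have hsup (X : V) (hX : X ∉ B) : B ⊔ ℝ ∙ X = ⊤ :=
    sup_span_singleton_eq_top_of_finrank_add_one (by rw [hB, hV]) hX
  have hdeg (X : V) (hX : X ∉ B) : finrank ℝ (LinearMap.range (δ X)) = q := by
    rw [LinearMap.range_eq_span_image_of_isAlt hδ hvanish (hsup X hX), himage]
  refine ⟨fun b hb hb₀ => ?_, hdeg⟩
  obtain ⟨X₀, hX₀⟩ : ∃ X, X ∉ B := by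
    by_contra! h
    rw [eq_top_iff'.mpr h, finrank_top, hV] at hB
    omega
  have hker : LinearMap.ker (δ X₀) = ℝ ∙ X₀ :=
    LinearMap.ker_eq_span_singleton_of_finrank_range_add_one (by rw [hdeg X₀ hX₀, hV])
      (halt X₀) (ne_of_mem_of_not_mem B.zero_mem hX₀).symm
  have hbX₀ : δ b X₀ ≠ 0 := by
    rw [Ne, hδ.eq_iff, ← LinearMap.mem_ker, hker]
    exact fun h => hb₀ (disjoint_def.mp (disjoint_span_singleton_of_notMem hX₀) b hb h)
  rw [LinearMap.range_apply_eq_span_singleton_of_mem hvanish hb (hsup X₀ hX₀),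
    finrank_span_singleton hbX₀]

/-- STATEMENT 4 (linear-algebra content of Proposition 2.7, 1) ⇒ 2)):
if `dim V = q+1`, the image of the alternating bilinear map `δ` spans a `q`-dimensional
subspace of `W`, and `δ` vanishes on a `q`-dimensional subspace `B ⊆ V`, then every
nonzero `b ∈ B` has degree `1` and every `X ∉ B` has degree `q`. -/
theorem weber_structure_degrees
    (V W : Type*)
    [AddCommGroup V] [Module ℝ V] [FiniteDimensional ℝ V]
    [AddCommGroup W] [Module ℝ W] [FiniteDimensional ℝ W]
    (q : ℕ) (hq : 1 ≤ q) (hV : Module.finrank ℝ V = q + 1)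
    (δ : V →ₗ[ℝ] V →ₗ[ℝ] W)
    (halt : ∀ x : V, δ x x = 0)
    (himage : Module.finrank ℝ
      (Submodule.span ℝ {w : W | ∃ x y : V, w = δ x y}) = q)
    (B : Submodule ℝ V) (hB : Module.finrank ℝ B = q)
    (hvanish : ∀ b ∈ B, ∀ b' ∈ B, δ b b' = 0) :
    (∀ b ∈ B, b ≠ 0 → Module.finrank ℝ (LinearMap.range (δ b)) = 1) ∧
    (∀ X : V, X ∉ B → Module.finrank ℝ (LinearMap.range (δ X)) = q) :=
  weber_structure_degrees_general V W q hV δ halt himage B hB hvanish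
end

section
/- Let V and W be finite-dimensional real vector spaces with dim V = q + 1, q ≥ 3, and let δ : V × V → W be an alternating bilinear map such that the span of its image {δ(x, y) : x, y ∈ V} has dimension q. Let B ⊆ V be a q-dimensional subspace such that every nonzero b ∈ B has degree 1, i.e. the linear map y ↦ δ(b, y) has rank exactly 1. Then δ vanishes identically on B × B. -/
/-!
If `δ b₀ b₀' ≠ 0` for some `b₀, b₀' ∈ B`, put `L = ℝ ∙ δ b₀ b₀'`. Degree one forces the line
`range (δ b)` to be `L` for `b₀`, `b₀'`, and then for every `b ∈ B` (directly if `δ b b₀' ≠ 0`,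
through `b + b₀` otherwise). So `δ` modulo `L` is an alternating form whose kernel contains the
hyperplane `B`, hence it vanishes, and the image of `δ` spans at most the line `L`, not `q ≥ 3`
dimensions.
-/

open Module Submodule LinearMap

section

variable {K V M : Type*} [Field K] [AddCommGroup V] [Module K V] [AddCommGroup M] [Module K M]

theorem LinearMap.range_le_of_finrank_range_eq_one {f : V →ₗ[K] M}
    (hf : finrank K (range f) = 1) {y : V} (hy : f y ≠ 0) {L : Submodule K M} (hyL : f y ∈ L) :
    range f ≤ L := by
  rw [eq_span_singleton_of_mem_of_finrank_eq_one hf (mem_range_self f y) hy]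
  exact span_le.2 (Set.singleton_subset_iff.2 hyL)

theorem LinearMap.IsAlt.compr₂ {f : V →ₗ[K] V →ₗ[K] M} (hf : f.IsAlt) {N : Type*}
    [AddCommGroup N] [Module K N] (g : M →ₗ[K] N) : (f.compr₂ g).IsAlt := fun x => by
  simp [hf.self_eq_zero x]

theorem LinearMap.mem_ker_compr₂_mkQ_iff {f : V →ₗ[K] V →ₗ[K] M} {L : Submodule K M} {x : V} :
    x ∈ ker (f.compr₂ L.mkQ) ↔ range (f x) ≤ L := by
  change L.mkQ ∘ₗ f x = 0 ↔ _
  rw [← range_le_ker_iff, ker_mkQ]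

theorem LinearMap.IsAlt.eq_zero_of_finrank_le_finrank_ker_add_one [FiniteDimensional K V]
    {f : V →ₗ[K] V →ₗ[K] M} (hf : f.IsAlt) (hker : finrank K V ≤ finrank K (ker f) + 1) :
    f = 0 := by
  ext x y
  rw [zero_apply, zero_apply]
  by_cases hx : x ∈ ker f
  · rw [mem_ker.1 hx, zero_apply]
  have hspan : ker f ⊔ span K {x} = ⊤ :=
    eq_top_of_finrank_eq <|
      le_antisymm (finrank_le _) (by rw [finrank_sup_span_singleton hx]; exact hker)
  obtain ⟨k, hk, z, hz, rfl⟩ := mem_sup.1 (hspan ▸ mem_top : y ∈ ker f ⊔ span K {x})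
  obtain ⟨c, rfl⟩ := mem_span_singleton.1 hz
  rw [map_add, map_smul, hf.self_eq_zero, smul_zero, add_zero, ← hf.neg, mem_ker.1 hk,
    zero_apply, neg_zero]

theorem LinearMap.IsAlt.le_ker_compr₂_mkQ_of_finrank_range_eq_one {f : V →ₗ[K] V →ₗ[K] M}
    (hf : f.IsAlt) {B : Submodule K V} (hdeg : ∀ b ∈ B, b ≠ 0 → finrank K (range (f b)) = 1)
    {b₀ b₀' : V} (hb₀ : b₀ ∈ B) (hb₀' : b₀' ∈ B) (hne : f b₀ b₀' ≠ 0) :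
    B ≤ ker (f.compr₂ (K ∙ f b₀ b₀').mkQ) := by
  set L := K ∙ f b₀ b₀'
  have hL (b : V) (hb : b ∈ B) (y : V) (hy : f b y ≠ 0) (hyL : f b y ∈ L) :
      b ∈ ker (f.compr₂ L.mkQ) :=
    mem_ker_compr₂_mkQ_iff.2 <|
      range_le_of_finrank_range_eq_one (hdeg b hb (by rintro rfl; simp at hy)) hy hyL
  have hw : f b₀ b₀' ∈ L := mem_span_singleton_self _
  have hb₀'L : b₀' ∈ ker (f.compr₂ L.mkQ) :=
    hL b₀' hb₀' b₀ (by rwa [← hf.neg, neg_ne_zero]) (by rw [← hf.neg]; exact neg_mem hw)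
  intro b hb
  by_cases hb' : f b b₀' = 0
  · have hsum : f (b + b₀) b₀' = f b₀ b₀' := by rw [map_add, add_apply, hb', zero_add]
    simpa using sub_mem (hL (b + b₀) (add_mem hb hb₀) b₀' (hsum ▸ hne) (hsum ▸ hw))
      (hL b₀ hb₀ b₀' hne hw)
  · refine hL b hb b₀' hb' ?_
    rw [← hf.neg]
    exact neg_mem (mem_ker_compr₂_mkQ_iff.1 hb₀'L (mem_range_self _ b))

end

theorem structure_tensor_vanishes_on_singular_subbundle_general
    (V W : Type*)
    [AddCommGroup V] [Module ℝ V] [FiniteDimensional ℝ V]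
    [AddCommGroup W] [Module ℝ W]
    (q : ℕ) (hq : 3 ≤ q) (hV : Module.finrank ℝ V = q + 1)
    (δ : V →ₗ[ℝ] V →ₗ[ℝ] W)
    (halt : ∀ x : V, δ x x = 0)
    (himage : Module.finrank ℝ
      (Submodule.span ℝ {w : W | ∃ x y : V, w = δ x y}) = q)
    (B : Submodule ℝ V) (hB : Module.finrank ℝ B = q)
    (hdeg : ∀ b ∈ B, b ≠ 0 → Module.finrank ℝ (LinearMap.range (δ b)) = 1) :
    ∀ b ∈ B, ∀ b' ∈ B, δ b b' = 0 := by
  by_contra! ⟨b₀, hb₀, b₀', hb₀', hne⟩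
  set L := ℝ ∙ δ b₀ b₀'
  have hBker : B ≤ ker (δ.compr₂ L.mkQ) :=
    IsAlt.le_ker_compr₂_mkQ_of_finrank_range_eq_one halt hdeg hb₀ hb₀' hne
  have hzero : δ.compr₂ L.mkQ = 0 :=
    (IsAlt.compr₂ halt _).eq_zero_of_finrank_le_finrank_ker_add_one <| by
      have := finrank_mono hBker
      omega
  have himage_le : span ℝ {w : W | ∃ x y : V, w = δ x y} ≤ L := by
    rw [span_le]
    rintro _ ⟨x, y, rfl⟩
    exact mem_ker_compr₂_mkQ_iff.1 (by simp [hzero]) (mem_range_self _ y)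
  have := finrank_mono himage_le
  rw [himage, finrank_span_singleton hne] at this
  omega

/-- STATEMENT 5 (linear-algebra content of Proposition 2.7, 2) ⇒ 3)):
if `dim V = q+1` with `q ≥ 3`, the image of the alternating bilinear map `δ` spans a
`q`-dimensional subspace of `W`, and every nonzero element of a `q`-dimensional subspace
`B ⊆ V` has degree `1`, then `δ` vanishes identically on `B × B`. -/
theorem structure_tensor_vanishes_on_singular_subbundle
    (V W : Type*)
    [AddCommGroup V] [Module ℝ V] [FiniteDimensional ℝ V]
    [AddCommGroup W] [Module ℝ W] [FiniteDimensional ℝ W]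
    (q : ℕ) (hq : 3 ≤ q) (hV : Module.finrank ℝ V = q + 1)
    (δ : V →ₗ[ℝ] V →ₗ[ℝ] W)
    (halt : ∀ x : V, δ x x = 0)
    (himage : Module.finrank ℝ
      (Submodule.span ℝ {w : W | ∃ x y : V, w = δ x y}) = q)
    (B : Submodule ℝ V) (hB : Module.finrank ℝ B = q)
    (hdeg : ∀ b ∈ B, b ≠ 0 → Module.finrank ℝ (LinearMap.range (δ b)) = 1) :
    ∀ b ∈ B, ∀ b' ∈ B, δ b b' = 0 :=
  structure_tensor_vanishes_on_singular_subbundle_general V W q hq hV δ halt himage B hB hdeg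
end

section
/- Let V and W be finite-dimensional real vector spaces with dim V = q + 1, q ≥ 3, and let δ : V × V → W be an alternating bilinear map such that the span of its image {δ(x, y) : x, y ∈ V} has dimension q. Let B, B' ⊆ V be q-dimensional subspaces such that δ vanishes identically on B × B and such that every nonzero b' ∈ B' has degree at most 1, i.e. the linear map y ↦ δ(b', y) has rank at most 1. Then B' = B. -/
/-!
If some `v ∈ B'` lay outside `B`, then `V = B ⊕ ℝ v`, and since `δ` vanishes on `B × B`,
alternation gives `δ (b + s v) (c + t v) = δ v (s c - t b)`. So the whole image of `δ` would lie
in the range of `δ v`, of dimension at most `1 < q`. Hence `B' ≤ B`, and equal dimensions give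
`B' = B`.
-/

namespace LinearMap

variable {R M N : Type*} [CommRing R] [AddCommGroup M] [Module R M] [AddCommGroup N] [Module R N]

theorem span_image_le_range_of_isotropic_of_sup_span_eq_top
    {δ : M →ₗ[R] M →ₗ[R] N} (halt : δ.IsAlt) {B : Submodule R M}
    (hB : ∀ b ∈ B, ∀ c ∈ B, δ b c = 0) {v : M} (hv : B ⊔ R ∙ v = ⊤) :
    Submodule.span R {w : N | ∃ x y : M, w = δ x y} ≤ range (δ v) := by
  have hdecomp : ∀ x : M, ∃ b ∈ B, ∃ s : R, b + s • v = x := fun x ↦ by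
    obtain ⟨b, hb, z, hz, hx⟩ := Submodule.mem_sup.mp (hv ▸ Submodule.mem_top : x ∈ B ⊔ R ∙ v)
    obtain ⟨s, rfl⟩ := Submodule.mem_span_singleton.mp hz
    exact ⟨b, hb, s, hx⟩
  rw [Submodule.span_le]
  rintro _ ⟨x, y, rfl⟩
  obtain ⟨b, hb, s, rfl⟩ := hdecomp x
  obtain ⟨c, hc, t, rfl⟩ := hdecomp y
  refine ⟨s • c - t • b, ?_⟩
  simp only [map_add, map_smul, map_sub, add_apply, smul_apply, hB b hb c hc, halt.self_eq_zero,
    ← halt.neg v b]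
  module

end LinearMap

theorem Submodule.sup_span_singleton_eq_top_of_finrank_add_one_s6
    {K V : Type*} [DivisionRing K] [AddCommGroup V] [Module K V] [FiniteDimensional K V]
    {B : Submodule K V} (hB : Module.finrank K B + 1 = Module.finrank K V) {v : V} (hv : v ∉ B) :
    B ⊔ K ∙ v = ⊤ := by
  rw [Submodule.sup_span_singleton_eq_top_iff hv]
  have := B.finrank_quotient_add_finrank
  omega

theorem singular_subbundle_unique_general
    (V W : Type*)
    [AddCommGroup V] [Module ℝ V] [FiniteDimensional ℝ V]
    [AddCommGroup W] [Module ℝ W]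
    (q : ℕ) (hq : 3 ≤ q) (hV : Module.finrank ℝ V = q + 1)
    (δ : V →ₗ[ℝ] V →ₗ[ℝ] W)
    (halt : ∀ x : V, δ x x = 0)
    (himage : Module.finrank ℝ
      (Submodule.span ℝ {w : W | ∃ x y : V, w = δ x y}) = q)
    (B B' : Submodule ℝ V)
    (hB : Module.finrank ℝ B = q) (hB' : Module.finrank ℝ B' = q)
    (hvanish : ∀ b ∈ B, ∀ b'' ∈ B, δ b b'' = 0)
    (hdeg : ∀ b' ∈ B', b' ≠ 0 → Module.finrank ℝ (LinearMap.range (δ b')) ≤ 1) :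
    B' = B := by
  have hle : B' ≤ B := by
    intro v hvB'
    by_contra hvB
    have htop : B ⊔ ℝ ∙ v = ⊤ :=
      Submodule.sup_span_singleton_eq_top_of_finrank_add_one_s6 (by omega) hvB
    have himage_le : q ≤ Module.finrank ℝ (LinearMap.range (δ v)) :=
      himage ▸ Submodule.finrank_mono
        (LinearMap.span_image_le_range_of_isotropic_of_sup_span_eq_top halt hvanish htop)
    have hdeg_v := hdeg v hvB' (by rintro rfl; exact hvB B.zero_mem)
    omega
  exact Submodule.eq_of_le_of_finrank_eq hle (hB'.trans hB.symm)

/-- linear-algebra content of the uniqueness assertion in Proposition 2.8: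
if `dim V = q+1` with `q ≥ 3`, the image of the alternating bilinear map `δ` spans a
`q`-dimensional subspace of `W`, `δ` vanishes on the `q`-dimensional subspace `B`, and
every nonzero element of the `q`-dimensional subspace `B'` has degree at most `1`,
then `B' = B`. -/
theorem singular_subbundle_unique
    (V W : Type*)
    [AddCommGroup V] [Module ℝ V] [FiniteDimensional ℝ V]
    [AddCommGroup W] [Module ℝ W] [FiniteDimensional ℝ W]
    (q : ℕ) (hq : 3 ≤ q) (hV : Module.finrank ℝ V = q + 1)
    (δ : V →ₗ[ℝ] V →ₗ[ℝ] W)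
    (halt : ∀ x : V, δ x x = 0)
    (himage : Module.finrank ℝ
      (Submodule.span ℝ {w : W | ∃ x y : V, w = δ x y}) = q)
    (B B' : Submodule ℝ V)
    (hB : Module.finrank ℝ B = q) (hB' : Module.finrank ℝ B' = q)
    (hvanish : ∀ b ∈ B, ∀ b'' ∈ B, δ b b'' = 0)
    (hdeg : ∀ b' ∈ B', b' ≠ 0 → Module.finrank ℝ (LinearMap.range (δ b')) ≤ 1) :
    B' = B :=
  singular_subbundle_unique_general V W q hq hV δ halt himage B B' hB hB' hvanish hdeg
end

section
/- Let m ∈ ℕ and s ≤ s' ≤ m. Let φ : ℝ × (Fin m → ℝ) → ℝ and ξ : Fin m → (ℝ × (Fin m → ℝ) → ℝ) be smooth functions, and write the coordinates on ℝ × (Fin m → ℝ) as (x, x_1, …, x_m). Assume ∂φ/∂x_σ = 0 identically for all σ > s, and ∂ξ^α/∂x_σ = 0 identically for all α ≤ s and all σ > s'. Define Xφ = ∂φ/∂x + Σ_{α=1}^{m} ξ^α · ∂φ/∂x_α. Then ∂(Xφ)/∂x_σ = 0 identically for all σ > s'. -/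
/-- the Claim in the proof of Lemma 4.4: on `ℝ × ℝᵐ` with coordinates
`(x, x_1, …, x_m)` (so the coordinate `x_α`, `1 ≤ α ≤ m`, corresponds to the index
`a : Fin m` with `a.val = α − 1`), if `φ` does not depend on `x_σ` for `σ > s` and each
`ξ^α` with `α ≤ s` does not depend on `x_σ` for `σ > s'`, where `s ≤ s' ≤ m`, then
`Xφ = ∂φ/∂x + Σ_α ξ^α ∂φ/∂x_α` does not depend on `x_σ` for `σ > s'`. -/
theorem total_derivative_rank
    (m s s' : ℕ) (hss' : s ≤ s') (hs'm : s' ≤ m)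
    (φ : ℝ × (Fin m → ℝ) → ℝ) (ξ : Fin m → (ℝ × (Fin m → ℝ) → ℝ))
    (hφ_smooth : ContDiff ℝ (⊤ : ℕ∞) φ)
    (hξ_smooth : ∀ a : Fin m, ContDiff ℝ (⊤ : ℕ∞) (ξ a))
    (hφ : ∀ i : Fin m, s ≤ (i : ℕ) → ∀ p : ℝ × (Fin m → ℝ),
      fderiv ℝ φ p (0, Pi.single i 1) = 0)
    (hξ : ∀ a : Fin m, (a : ℕ) < s → ∀ i : Fin m, s' ≤ (i : ℕ) →
      ∀ p : ℝ × (Fin m → ℝ), fderiv ℝ (ξ a) p (0, Pi.single i 1) = 0) :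
    ∀ i : Fin m, s' ≤ (i : ℕ) → ∀ p : ℝ × (Fin m → ℝ),
      fderiv ℝ (fun p : ℝ × (Fin m → ℝ) =>
        fderiv ℝ φ p (1, 0) + ∑ a : Fin m, ξ a p * fderiv ℝ φ p (0, Pi.single a 1))
        p (0, Pi.single i 1) = 0 := by
  intro i hi p
  classical
  have hφd : Differentiable ℝ φ := hφ_smooth.differentiable (by simp)
  have hDd : Differentiable ℝ (fderiv ℝ φ) :=
    (hφ_smooth.fderiv_right (m := 1) (by exact WithTop.coe_le_coe.mpr le_top)).differentiable (by simp)
  set D2 := fderiv ℝ (fderiv ℝ φ) with hD2def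
  -- derivative of the directional-derivative function
  have hA : ∀ (v : ℝ × (Fin m → ℝ)) (q : ℝ × (Fin m → ℝ)),
      HasFDerivAt (fun y => fderiv ℝ φ y v)
        ((ContinuousLinearMap.apply ℝ ℝ v).comp (D2 q)) q := by
    intro v q
    exact (ContinuousLinearMap.apply ℝ ℝ v).hasFDerivAt.comp q (hDd q).hasFDerivAt
  -- the second derivative in direction e_i (second slot) vanishes
  have hDzero : ∀ (q w : ℝ × (Fin m → ℝ)), D2 q w (0, Pi.single i 1) = 0 := by
    intro q w
    have h1 : (fun y => fderiv ℝ φ y ((0 : ℝ), Pi.single i 1)) =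
        fun _ : ℝ × (Fin m → ℝ) => (0 : ℝ) :=
      funext (hφ i (hss'.trans hi))
    have h3 : (ContinuousLinearMap.apply ℝ ℝ ((0 : ℝ), Pi.single i 1)).comp (D2 q) = 0 := by
      rw [← (hA ((0 : ℝ), Pi.single i 1) q).fderiv, h1]
      exact fderiv_const_apply 0
    simpa using congrArg (fun L : (ℝ × (Fin m → ℝ)) →L[ℝ] ℝ => L w) h3
  -- symmetry of the second derivative
  have hsymm : ∀ (q v w : ℝ × (Fin m → ℝ)), D2 q v w = D2 q w v := by
    intro q v w
    exact second_derivative_symmetric (fun y => (hφd y).hasFDerivAt) (hDd q).hasFDerivAt v w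
  have hDie : ∀ v : ℝ × (Fin m → ℝ), D2 p ((0 : ℝ), Pi.single i 1) v = 0 :=
    fun v => (hsymm p _ v).trans (hDzero p v)
  -- derivative of the whole expression
  have hF : HasFDerivAt (fun q : ℝ × (Fin m → ℝ) =>
      fderiv ℝ φ q (1, 0) + ∑ a : Fin m, ξ a q * fderiv ℝ φ q (0, Pi.single a 1))
      (((ContinuousLinearMap.apply ℝ ℝ ((1 : ℝ), (0 : Fin m → ℝ))).comp (D2 p)) +
        ∑ a : Fin m,
          (ξ a p • ((ContinuousLinearMap.apply ℝ ℝ ((0 : ℝ), Pi.single a 1)).comp (D2 p)) +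
            fderiv ℝ φ p (0, Pi.single a 1) • fderiv ℝ (ξ a) p)) p := by
    refine (hA ((1 : ℝ), (0 : Fin m → ℝ)) p).add (HasFDerivAt.fun_sum fun a _ => ?_)
    exact (((hξ_smooth a).differentiable (by simp) p).hasFDerivAt).mul
      (hA ((0 : ℝ), Pi.single a 1) p)
  rw [hF.fderiv]
  simp only [ContinuousLinearMap.add_apply, ContinuousLinearMap.sum_apply,
    ContinuousLinearMap.smul_apply, ContinuousLinearMap.coe_comp', Function.comp_apply,
    ContinuousLinearMap.apply_apply, hDie, smul_zero, zero_add, smul_eq_mul]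
  refine Finset.sum_eq_zero fun a _ => ?_
  rcases lt_or_ge (a : ℕ) s with h | h
  · simp [hξ a h i hi p]
  · simp [hφ a h p]
end
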